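/- Let q be a real number with q > 0 and q ≠ 1, let h be an integer with h ≥ 1, and let n be a natural number with n ≥ 1. Then (-1)^n · q^n · G_{n+1}^{(h)}(-1 | q)/(n+1) = (1+q) + q^{h+1} · G_{n+1}^{(h)}(q^{-1})/(n+1). -/

import Mathlib

/-!
Write `T = ∑ₖ C(n,k) (-1)ᵏ / (1 + q^{h+k})`. Splitting
`q^{-k}/(1+q^{h+k}) = q^{-k} - q^h/(1+q^{h+k})` and summing the binomial part gives
`G_{n+1}(-1|q)` in terms of `(1 - q⁻¹)ⁿ - qʰ T`, while `1/(1+q^{-(h+k)}) = 1 - 1/(1+q^{h+k})`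
and `∑ₖ C(n,k) (-1)ᵏ = 0` for `n ≥ 1` give `G_{n+1}(q⁻¹)` in terms of `-T`. The prefactors
then match because `(-q)(1 - q⁻¹) = 1 - q`.
-/

/-- The q-analogue of a real number `x`: `[x]_q = (1 - q^x)/(1 - q)`,
where `q^x` is a real power of the positive base `q`. -/
noncomputable def qnum (q x : ℝ) : ℝ := (1 - q ^ x) / (1 - q)

/-- The (h,q)-Genocchi polynomial `G_m^{(h)}(x|q)`: `G_0^{(h)}(x|q) = 0` and for `m ≥ 1`,
`G_m^{(h)}(x|q) = m (1+q)/(1-q)^{m-1} ∑_{k=0}^{m-1} C(m-1,k) (-1)^k q^{kx}/(1+q^{h+k})`,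
with real powers of the positive base `q`. -/
noncomputable def hqGenocchi (h : ℤ) (q : ℝ) (m : ℕ) (x : ℝ) : ℝ :=
  if m = 0 then 0
  else (m : ℝ) * (1 + q) / (1 - q) ^ (m - 1) *
    ∑ k ∈ Finset.range m, ((m - 1).choose k : ℝ) * (-1 : ℝ) ^ k *
      q ^ ((k : ℝ) * x) / (1 + q ^ ((h : ℝ) + (k : ℝ)))

open Finset

noncomputable def hqGenocchiSum (h : ℤ) (q : ℝ) (n : ℕ) (x : ℝ) : ℝ :=
  ∑ k ∈ range (n + 1), (n.choose k : ℝ) * (-1 : ℝ) ^ k *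
    q ^ ((k : ℝ) * x) / (1 + q ^ ((h : ℝ) + (k : ℝ)))

theorem hqGenocchi_succ (h : ℤ) (q : ℝ) (n : ℕ) (x : ℝ) :
    hqGenocchi h q (n + 1) x =
      ((n : ℝ) + 1) * ((1 + q) / (1 - q) ^ n * hqGenocchiSum h q n x) := by
  simp only [hqGenocchi, hqGenocchiSum, Nat.add_sub_cancel, if_neg n.succ_ne_zero]
  push_cast
  ring

theorem sum_range_choose_mul_pow {R : Type*} [CommSemiring R] (n : ℕ) (y : R) :
    ∑ k ∈ range (n + 1), (n.choose k : R) * y ^ k = (1 + y) ^ n := by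
  rw [add_comm 1 y, add_pow]
  exact sum_congr rfl fun k _ => by rw [one_pow, mul_one, mul_comm]

theorem hqGenocchiSum_neg_one {q : ℝ} (hq : 0 < q) (h : ℤ) (n : ℕ) :
    hqGenocchiSum h q n (-1) = (1 - q⁻¹) ^ n - q ^ (h : ℝ) * hqGenocchiSum h q n 0 := by
  have hsplit : ∀ k : ℕ, q ^ ((k : ℝ) * (-1)) / (1 + q ^ ((h : ℝ) + k))
      = (q⁻¹) ^ k - q ^ (h : ℝ) * (q ^ ((k : ℝ) * 0) / (1 + q ^ ((h : ℝ) + k))) := by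
    intro k
    have hpos : 0 < q ^ ((h : ℝ) + k) := Real.rpow_pos_of_pos hq _
    rw [mul_neg_one, mul_zero, Real.rpow_zero, Real.rpow_neg hq.le, Real.rpow_natCast,
      Real.rpow_add hq, Real.rpow_natCast, inv_pow]
    rw [Real.rpow_add hq, Real.rpow_natCast] at hpos
    field_simp
    ring
  simp only [hqGenocchiSum, mul_div_assoc, hsplit, mul_sub, sum_sub_distrib, mul_sum]
  rw [sub_eq_add_neg (1 : ℝ), ← sum_range_choose_mul_pow]
  congr 1
  · exact sum_congr rfl fun k _ => by rw [neg_pow, inv_pow]; ring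
  · exact sum_congr rfl fun k _ => by ring

theorem hqGenocchiSum_inv_zero {q : ℝ} (hq : 0 < q) (h : ℤ) {n : ℕ} (hn : n ≠ 0) :
    hqGenocchiSum h q⁻¹ n 0 = -hqGenocchiSum h q n 0 := by
  have hsplit : ∀ k : ℕ, (q⁻¹) ^ ((k : ℝ) * 0) / (1 + (q⁻¹) ^ ((h : ℝ) + k))
      = 1 - q ^ ((k : ℝ) * 0) / (1 + q ^ ((h : ℝ) + k)) := by
    intro k
    have hpos : 0 < q ^ ((h : ℝ) + k) := Real.rpow_pos_of_pos hq _
    rw [mul_zero, Real.rpow_zero, Real.rpow_zero, Real.inv_rpow hq.le]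
    field_simp
    ring
  have halt : ∑ k ∈ range (n + 1), (n.choose k : ℝ) * (-1) ^ k = 0 := by
    rw [sum_range_choose_mul_pow, add_neg_cancel, zero_pow hn]
  simp only [hqGenocchiSum, mul_div_assoc, hsplit, mul_sub, mul_one, sum_sub_distrib, halt]
  ring

theorem statement5_general (q : ℝ) (hq0 : 0 < q) (hq1 : q ≠ 1) (h : ℤ)
    (n : ℕ) (hn : 1 ≤ n) :
    (-1 : ℝ) ^ n * q ^ n * hqGenocchi h q (n + 1) (-1) / ((n : ℝ) + 1) =
      (1 + q) + q ^ ((h : ℝ) + 1) * hqGenocchi h q⁻¹ (n + 1) 0 / ((n : ℝ) + 1) := by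
  rw [hqGenocchi_succ, hqGenocchi_succ, hqGenocchiSum_neg_one hq0,
    hqGenocchiSum_inv_zero hq0 h (by omega), Real.rpow_add hq0, Real.rpow_one]
  have hpow : (1 - q⁻¹) ^ n = (1 - q) ^ n / (-q) ^ n := by
    rw [← div_pow]; field_simp; ring
  have h1q : 1 - q ≠ 0 := sub_ne_zero.mpr hq1.symm
  have hnq : (-q) ^ n ≠ 0 := pow_ne_zero n (neg_ne_zero.mpr hq0.ne')
  rw [← mul_pow, neg_one_mul, hpow]
  -- as an atom, `(-q) ^ n` cancels without `ring` having to combine powers of `-1`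
  generalize (-q) ^ n = p at hnq ⊢
  field_simp
  ring

theorem statement5 (q : ℝ) (hq0 : 0 < q) (hq1 : q ≠ 1) (h : ℤ) (hh : 1 ≤ h)
    (n : ℕ) (hn : 1 ≤ n) :
    (-1 : ℝ) ^ n * q ^ n * hqGenocchi h q (n + 1) (-1) / ((n : ℝ) + 1) =
      (1 + q) + q ^ ((h : ℝ) + 1) * hqGenocchi h q⁻¹ (n + 1) 0 / ((n : ℝ) + 1) :=
  statement5_general q hq0 hq1 h n hn
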